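/- Let (g, [·,·], T) be a Hom-Lie algebra with equivariant and nilpotent twist map T, and let I be a maximal proper ideal of g. Then Im(T) ⊂ I. -/

import Mathlib

/-!
Equivariance in the first argument and skew-symmetry give `[x, T y] = T [x, y]`, so `I ⊔ Im T` is
an ideal, and by maximality it is `I` or `g`. It cannot be `g`: the map induced by `T` on `g ⧸ I`
would then be surjective, and a surjective nilpotent map lives only on the zero space.
-/

variable {F : Type*} [Field F] [CharZero F]
  {g : Type*} [AddCommGroup g] [Module F g] [FiniteDimensional F g]

/-- An ideal of a Hom-Lie algebra: a subspace closed under bracketing with g and under T. -/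
def IsHomLieIdeal (br : g →ₗ[F] g →ₗ[F] g) (T : g →ₗ[F] g) (I : Submodule F g) : Prop :=
  (∀ x : g, ∀ y ∈ I, br x y ∈ I) ∧ (∀ y ∈ I, T y ∈ I)

theorem Submodule.eq_top_of_sup_range_eq_top {R M : Type*} [Ring R] [AddCommGroup M] [Module R M]
    {T : Module.End R M} (hT : IsNilpotent T)
    {I : Submodule R M} (hI : I ≤ I.comap T) (h : I ⊔ LinearMap.range T = ⊤) : I = ⊤ := by
  obtain ⟨m, hm⟩ := hT
  have hsurj : Function.Surjective (I.mapQ I T hI) := by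
    rw [← LinearMap.range_eq_top, range_mapQ, map_mkQ_eq_top, h]
  have hzero : I.mapQ I T hI ^ m = 0 := by
    rw [← mapQ_pow]
    ext x
    simp [hm]
  have hsurj_pow : LinearMap.range (I.mapQ I T hI ^ m) = ⊤ :=
    LinearMap.range_eq_top.mpr (by rw [Module.End.coe_pow]; exact hsurj.iterate m)
  rw [hzero, LinearMap.range_zero] at hsurj_pow
  exact Submodule.Quotient.subsingleton_iff.mp
    ((Submodule.subsingleton_iff R).mp (subsingleton_iff_bot_eq_top.mp hsurj_pow))

theorem bracket_map_right_of_skew {R M : Type*} [CommRing R] [AddCommGroup M] [Module R M]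
    {br : M →ₗ[R] M →ₗ[R] M} {T : Module.End R M}
    (skew : ∀ x y, br x y = - br y x) (equivar : ∀ x y, T (br x y) = br (T x) y) (x y : M) :
    br x (T y) = T (br x y) := by
  rw [skew, ← equivar, ← map_neg, ← skew]

theorem IsHomLieIdeal.sup_range {K L : Type*} [Field K] [AddCommGroup L] [Module K L]
    {br : L →ₗ[K] L →ₗ[K] L} {T : L →ₗ[K] L} {I : Submodule K L}
    (hI : IsHomLieIdeal br T I) (hright : ∀ x y, br x (T y) = T (br x y)) :
    IsHomLieIdeal br T (I ⊔ LinearMap.range T) := by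
  constructor
  · intro x y hy
    obtain ⟨a, ha, _, ⟨c, rfl⟩, rfl⟩ := Submodule.mem_sup.mp hy
    rw [map_add, hright]
    exact add_mem (Submodule.mem_sup_left (hI.1 x a ha)) (Submodule.mem_sup_right ⟨_, rfl⟩)
  · intro y hy
    obtain ⟨a, ha, _, ⟨c, rfl⟩, rfl⟩ := Submodule.mem_sup.mp hy
    rw [map_add]
    exact add_mem (Submodule.mem_sup_left (hI.2 a ha)) (Submodule.mem_sup_right ⟨_, rfl⟩)

theorem stmt_7_general (br : g →ₗ[F] g →ₗ[F] g) (T : g →ₗ[F] g)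
    (skew : ∀ x y, br x y = - br y x)
    (equivar : ∀ x y, T (br x y) = br (T x) y)
    (hnil : ∃ m, T ^ m = 0)
    (I : Submodule F g) (hI : IsHomLieIdeal br T I) (hproper : I ≠ ⊤)
    (hmax : ∀ J : Submodule F g, IsHomLieIdeal br T J → I ≤ J → J = I ∨ J = ⊤) :
    LinearMap.range T ≤ I := by
  have hsup := hI.sup_range (bracket_map_right_of_skew skew equivar)
  rcases hmax _ hsup le_sup_left with h | h
  · exact h ▸ le_sup_right
  · exact absurd (Submodule.eq_top_of_sup_range_eq_top hnil hI.2 h) hproper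

/-- If T is equivariant and nilpotent and I is a maximal proper ideal,
then Im(T) ⊆ I. -/
theorem stmt_7 (br : g →ₗ[F] g →ₗ[F] g) (T : g →ₗ[F] g)
    (skew : ∀ x y, br x y = - br y x)
    (homJacobi : ∀ x y z, br (T x) (br y z) + br (T y) (br z x) + br (T z) (br x y) = 0)
    (equivar : ∀ x y, T (br x y) = br (T x) y)
    (hnil : ∃ m, T ^ m = 0)
    (I : Submodule F g) (hI : IsHomLieIdeal br T I) (hproper : I ≠ ⊤)
    (hmax : ∀ J : Submodule F g, IsHomLieIdeal br T J → I ≤ J → J = I ∨ J = ⊤) :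
    LinearMap.range T ≤ I :=
  stmt_7_general br T skew equivar hnil I hI hproper hmax
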